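/- Let B be a real symmetric positive semidefinite n×n matrix and s ≥ 0. Then the matrix Φ(sB) = Σ_{k≥0} (sB)^k/(2k+1)! (a convergent power series) is symmetric and satisfies ⟨Φ(sB)x, x⟩ ≥ ⟨x,x⟩ for all x ∈ ℝ^n; in particular Φ(sB) is positive definite and det Φ(sB) ≥ 1. -/

import Mathlib

/-!
Splitting off the constant term, `Φ(M) - 1 = Σ_{k≥1} M^k/(2k+1)!` is a convergent sum of positive
semidefinite matrices when `M` is, hence positive semidefinite: `Φ(M) ≥ 1` in the Loewner order.
Everything else follows: `1 + (Φ(M) - 1)` is positive definite (in particular symmetric), and its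
eigenvalues, which lie in its spectrum, are all at least `1`, so their product `det Φ(M)` is too.
-/

open Matrix

/-- The matrix power series `Φ(M) = Σ_{k≥0} M^k/(2k+1)!`, i.e. the entire function
`z ↦ sinh(√z)/√z` evaluated on the square matrix `M`. -/
noncomputable def matPhi {n : ℕ} (M : Matrix (Fin n) (Fin n) ℝ) : Matrix (Fin n) (Fin n) ℝ :=
  ∑' k : ℕ, (((2 * k + 1).factorial : ℝ))⁻¹ • M ^ k

theorem summable_inv_factorial_two_mul_add_one_smul_pow {𝔸 : Type*} [NormedRing 𝔸]
    [NormedAlgebra ℝ 𝔸] [CompleteSpace 𝔸] (a : 𝔸) :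
    Summable fun k : ℕ => (((2 * k + 1).factorial : ℝ))⁻¹ • a ^ k := by
  refine .of_norm_bounded (NormedSpace.norm_expSeries_summable' (𝕂 := ℝ) a) fun k => ?_
  rw [norm_smul, norm_smul]
  gcongr
  simp only [norm_inv, Real.norm_natCast]
  gcongr
  omega

theorem hasSum_matPhi {n : ℕ} (M : Matrix (Fin n) (Fin n) ℝ) :
    HasSum (fun k : ℕ => (((2 * k + 1).factorial : ℝ))⁻¹ • M ^ k) (matPhi M) := by
  -- any normed-algebra structure inducing the product topology will do
  let _ := Matrix.linftyOpNormedRing (n := Fin n) (α := ℝ)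
  let _ := Matrix.linftyOpNormedAlgebra (n := Fin n) (α := ℝ) (R := ℝ)
  exact (summable_inv_factorial_two_mul_add_one_smul_pow M).hasSum

theorem HasSum.dotProduct_mulVec {ι m n R : Type*} [Fintype m] [Fintype n] [CommSemiring R]
    [TopologicalSpace R] [IsTopologicalSemiring R] {f : ι → Matrix m n R} {A : Matrix m n R}
    (hf : HasSum f A) (x : m → R) (y : n → R) :
    HasSum (fun i => x ⬝ᵥ f i *ᵥ y) (x ⬝ᵥ A *ᵥ y) :=
  (hf.map (mulVec.addMonoidHomLeft y) (continuous_id.matrix_mulVec continuous_const)).map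
    (dotProductBilin R R x).toAddMonoidHom (continuous_const.dotProduct continuous_id)

open ComplexOrder in
theorem Matrix.PosSemidef.of_hasSum {ι m 𝕜 : Type*} [Fintype m] [RCLike 𝕜]
    {f : ι → Matrix m m 𝕜} {A : Matrix m m 𝕜}
    (hf : HasSum f A) (h : ∀ i, (f i).PosSemidef) : A.PosSemidef := by
  refine .of_dotProduct_mulVec_nonneg ?_ fun x => ?_
  · exact hf.matrix_conjTranspose.unique (by simpa only [(h _).isHermitian.eq] using hf)
  · exact (hf.dotProduct_mulVec (star x) x).nonneg fun i => (h i).dotProduct_mulVec_nonneg x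

open scoped MatrixOrder ComplexOrder in
theorem Matrix.one_le_det_of_one_le {m 𝕜 : Type*} [Fintype m] [DecidableEq m] [RCLike 𝕜]
    {A : Matrix m m 𝕜} (h : 1 ≤ A) : 1 ≤ A.det := by
  have hA : A.IsHermitian := by simpa using isHermitian_one.add h.isHermitian
  have h_spectrum := (CFC.one_le_iff (R := ℝ) A).1 h
  rw [hA.det_eq_prod_eigenvalues]
  exact_mod_cast Finset.one_le_prod fun i _ => h_spectrum _ (hA.eigenvalues_mem_spectrum_real i)

open scoped MatrixOrder in
theorem one_le_matPhi {n : ℕ} {M : Matrix (Fin n) (Fin n) ℝ} (hM : M.PosSemidef) :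
    1 ≤ matPhi M := by
  have h := (hasSum_nat_add_iff' 1).2 (hasSum_matPhi M)
  simp only [Finset.sum_range_one, pow_zero, mul_zero, zero_add, Nat.factorial_one,
    Nat.cast_one, inv_one, one_smul] at h
  exact PosSemidef.of_hasSum h fun k => (hM.pow _).smul (by positivity)

theorem stmt_8 (n : ℕ) (B : Matrix (Fin n) (Fin n) ℝ) (hB : B.PosSemidef)
    (s : ℝ) (hs : 0 ≤ s) :
    (matPhi (s • B)).IsSymm ∧
    (∀ x : Fin n → ℝ, x ⬝ᵥ x ≤ ((matPhi (s • B)).mulVec x) ⬝ᵥ x) ∧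
    (matPhi (s • B)).PosDef ∧
    1 ≤ (matPhi (s • B)).det := by
  have hΦ : (matPhi (s • B) - 1).PosSemidef := one_le_matPhi (hB.smul hs)
  have hPD : (matPhi (s • B)).PosDef := by simpa using PosDef.one.add_posSemidef hΦ
  refine ⟨isHermitian_iff_isSymm.1 hPD.isHermitian, fun x => ?_, hPD, one_le_det_of_one_le hΦ⟩
  have hx := hΦ.dotProduct_mulVec_nonneg x
  rw [star_trivial, sub_mulVec, one_mulVec, dotProduct_sub, dotProduct_comm] at hx
  exact sub_nonneg.1 hx
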